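/- Let G1=(V1,E1,ℓ1) and G2=(V2,E2,ℓ2) be finite labeled graphs with single-character vertex labels. Then the following are equivalent: (1) for every n∈ℕ there exists z ∈ Subseq(G1) ∩ Subseq(G2) with |z| ≥ n; (2) there exists a character c such that G1 contains a cycle through a vertex labeled c and G2 contains a cycle through a vertex labeled c. -/

import Mathlib

open List Relation

section Defs

variable {V V1 V2 V3 α : Type*}

/-- A (directed) path: a nonempty list of vertices, consecutive ones joined by edges. -/
def IsPath (E : V → V → Prop) (p : List V) : Prop :=
  p ≠ [] ∧ p.Chain' E

/-- Paths ending at `v` (the set `P(v)`). -/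
def EndsAt (E : V → V → Prop) (v : V) (p : List V) : Prop :=
  IsPath E p ∧ p.getLast? = some v

/-- A path is left-maximal if its first vertex has no in-coming edges. -/
def LeftMax (E : V → V → Prop) (p : List V) : Prop :=
  ∀ w u, p.head? = some w → ¬ E u w

/-- A path is right-maximal if its last vertex has no out-going edges. -/
def RightMax (E : V → V → Prop) (p : List V) : Prop :=
  ∀ w u, p.getLast? = some w → ¬ E w u

/-- `Subseq(ℓ(P(v)))`: subsequences of label strings of paths ending at `v`. -/
def SubseqAt (E : V → V → Prop) (ℓ : V → α) (v : V) : Set (List α) :=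
  {z | ∃ p, EndsAt E v p ∧ z.Sublist (p.map ℓ)}

/-- `Subseq(ℓ(LMP(v)))`: subsequences of label strings of left-maximal paths ending at `v`. -/
def SubseqLM (E : V → V → Prop) (ℓ : V → α) (v : V) : Set (List α) :=
  {z | ∃ p, EndsAt E v p ∧ LeftMax E p ∧ z.Sublist (p.map ℓ)}

/-- `Subseq(G)`: subsequences of label strings of all paths of `G`. -/
def SubseqG (E : V → V → Prop) (ℓ : V → α) : Set (List α) :=
  {z | ∃ p, IsPath E p ∧ z.Sublist (p.map ℓ)}

/-- A graph is acyclic if no vertex lies on a nonempty cycle. -/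
def Acyclic (E : V → V → Prop) : Prop :=
  ∀ v, ¬ Relation.TransGen E v v

/-- The set `S_IC(v1,v2,v3)`. -/
def SIC (E1 : V1 → V1 → Prop) (ℓ1 : V1 → α) (E2 : V2 → V2 → Prop) (ℓ2 : V2 → α)
    (E3 : V3 → V3 → Prop) (ℓ3 : V3 → α) (v1 : V1) (v2 : V2) (v3 : V3) :
    Set (List α) :=
  {z | (∃ q, EndsAt E3 v3 q ∧ LeftMax E3 q ∧ (q.map ℓ3).Sublist z) ∧
       z ∈ SubseqAt E1 ℓ1 v1 ∧ z ∈ SubseqAt E2 ℓ2 v2}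

/-- Maximum length of a string in `S`, with `⊥` (= −∞) for `S = ∅`. -/
noncomputable def maxLen (S : Set (List α)) : WithBot ℕ :=
  sSup ((fun z : List α => (z.length : WithBot ℕ)) '' S)

/-- `L(v1,v2)`: the maximum length of a common subsequence (as a natural number). -/
noncomputable def Lval (E1 : V1 → V1 → Prop) (ℓ1 : V1 → α)
    (E2 : V2 → V2 → Prop) (ℓ2 : V2 → α) (v1 : V1) (v2 : V2) : ℕ :=
  sSup {n | ∃ z ∈ SubseqAt E1 ℓ1 v1 ∩ SubseqAt E2 ℓ2 v2, n = z.length}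

/-- `D(v1,v2,v3)`: the maximum length of a string in `S_IC(v1,v2,v3)`, `−∞` if empty. -/
noncomputable def Dval (E1 : V1 → V1 → Prop) (ℓ1 : V1 → α) (E2 : V2 → V2 → Prop) (ℓ2 : V2 → α)
    (E3 : V3 → V3 → Prop) (ℓ3 : V3 → α) (v1 : V1) (v2 : V2) (v3 : V3) : WithBot ℕ :=
  maxLen (SIC E1 ℓ1 E2 ℓ2 E3 ℓ3 v1 v2 v3)

end Defs

/-!
A common subsequence `z` is the label string of a vertex sequence `w₁` of `G1` and of one `w₂` of
`G2`, each ordered by reachability since it is picked out of a path. If `z` is longer than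
`|V1 × V2|`, two positions of `z` carry the same pair of vertices `(u₁, u₂)` in `zip w₁ w₂`, so each
`uᵢ` lies on a cycle, and both are labelled by the same letter of `z`. Conversely, running around
cycles through vertices labelled `c` yields paths of both graphs containing `cⁿ` as a subsequence
for every `n`.
-/

section

variable {V α : Type*} {E : V → V → Prop}

theorem Relation.TransGen.exists_isChain_cons_append_singleton {a b : V} (h : TransGen E a b) :
    ∃ l, IsChain E (a :: l ++ [b]) := by
  induction h with
  | single hab => exact ⟨[], by simpa using hab⟩
  | @tail b c _ hbc ih =>
    obtain ⟨l, hl⟩ := ih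
    exact ⟨l ++ [b], by simpa [isChain_append] using ⟨hl, hbc⟩⟩

theorem List.IsChain.pairwise_transGen {p : List V} (hp : p.IsChain E) :
    p.Pairwise (TransGen E) :=
  isChain_iff_pairwise.mp (hp.imp fun _ _ => TransGen.single)

theorem List.Pairwise.exists_rel_self_of_card_lt {R : α → α → Prop} [Fintype α] {l : List α}
    (hl : l.Pairwise R) (hcard : Fintype.card α < l.length) : ∃ x ∈ l, R x x := by
  by_contra! hirrefl
  have hnodup : l.Nodup :=
    hl.imp_of_mem fun ha _ hab => by rintro rfl; exact hirrefl _ ha hab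
  exact hcard.not_ge hnodup.length_le_card

theorem List.Pairwise.zip {β : Type*} {R : α → α → Prop} {S : β → β → Prop}
    {l₁ : List α} {l₂ : List β} (h₁ : l₁.Pairwise R) (h₂ : l₂.Pairwise S) :
    (l₁.zip l₂).Pairwise fun x y => R x.1 y.1 ∧ S x.2 y.2 := by
  induction l₁ generalizing l₂ with
  | nil => simp
  | cons a l₁ ih =>
    cases l₂ with
    | nil => simp
    | cons b l₂ =>
      rw [pairwise_cons] at h₁ h₂
      refine pairwise_cons.mpr ⟨fun y hy => ?_, ih h₁.2 h₂.2⟩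
      exact ⟨h₁.1 _ (of_mem_zip hy).1, h₂.1 _ (of_mem_zip hy).2⟩

theorem List.eq_of_mem_zip_of_map_eq {β γ : Type*} {f : α → γ} {g : β → γ}
    {l₁ : List α} {l₂ : List β} (h : l₁.map f = l₂.map g) {x : α × β} (hx : x ∈ l₁.zip l₂) :
    f x.1 = g x.2 := by
  induction l₁ generalizing l₂ with
  | nil => simp at hx
  | cons a l₁ ih =>
    cases l₂ with
    | nil => simp at hx
    | cons b l₂ =>
      simp only [map_cons, cons.injEq] at h
      rcases mem_cons.mp hx with rfl | hx
      exacts [h.1, ih h.2 hx]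

theorem exists_pairwise_transGen_of_mem_subseqG {ℓ : V → α} {z : List α}
    (hz : z ∈ SubseqG E ℓ) : ∃ w : List V, w.Pairwise (TransGen E) ∧ w.map ℓ = z := by
  obtain ⟨p, ⟨-, hp⟩, hzp⟩ := hz
  obtain ⟨w, hwp, rfl⟩ := sublist_map_iff.mp hzp
  exact ⟨w, hp.pairwise_transGen.sublist hwp, rfl⟩

theorem exists_isPath_replicate_sublist {v : V} (hv : TransGen E v v) (n : ℕ) :
    ∃ p, IsPath E p ∧ replicate n v <+ p := by
  obtain ⟨l, hl⟩ := hv.exists_isChain_cons_append_singleton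
  suffices ∃ p, IsChain E (v :: p) ∧ replicate n v <+ p from
    let ⟨p, hp, hnp⟩ := this; ⟨v :: p, ⟨cons_ne_nil _ _, hp⟩, hnp.cons v⟩
  induction n with
  | zero => exact ⟨[], .singleton v, nil_sublist _⟩
  | succ n ih =>
    obtain ⟨p, hp, hnp⟩ := ih
    refine ⟨l ++ v :: p, ?_, ?_⟩
    · simpa using hl.append_overlap (l₂ := [v]) hp (cons_ne_nil _ _)
    · exact (hnp.cons_cons v).trans (sublist_append_right l _)

theorem replicate_mem_subseqG {ℓ : V → α} {v : V} (hv : TransGen E v v) (n : ℕ) :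
    replicate n (ℓ v) ∈ SubseqG E ℓ := by
  obtain ⟨p, hp, hnp⟩ := exists_isPath_replicate_sublist hv n
  exact ⟨p, hp, map_replicate ▸ hnp.map ℓ⟩

theorem exists_common_cycle_label_of_card_lt_length {V1 V2 : Type*} [Fintype V1] [Fintype V2]
    {E1 : V1 → V1 → Prop} {ℓ1 : V1 → α} {E2 : V2 → V2 → Prop} {ℓ2 : V2 → α} {z : List α}
    (h1 : z ∈ SubseqG E1 ℓ1) (h2 : z ∈ SubseqG E2 ℓ2)
    (hz : Fintype.card (V1 × V2) < z.length) :
    ∃ c : α, (∃ v1, ℓ1 v1 = c ∧ TransGen E1 v1 v1) ∧ (∃ v2, ℓ2 v2 = c ∧ TransGen E2 v2 v2) := by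
  obtain ⟨w1, hw1, rfl⟩ := exists_pairwise_transGen_of_mem_subseqG h1
  obtain ⟨w2, hw2, hw⟩ := exists_pairwise_transGen_of_mem_subseqG h2
  have hlen : (w1.zip w2).length = w1.length := by
    rw [length_zip, ← length_map (f := ℓ1), ← hw, length_map, min_self]
  obtain ⟨⟨v1, v2⟩, hv, hv1, hv2⟩ :=
    (hw1.zip hw2).exists_rel_self_of_card_lt (by rwa [hlen, ← length_map (f := ℓ1)])
  exact ⟨ℓ1 v1, ⟨v1, rfl, hv1⟩, ⟨v2, (eq_of_mem_zip_of_map_eq hw.symm hv).symm, hv2⟩⟩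

end

theorem stmt16 {V1 V2 α : Type*} [Fintype V1] [Fintype V2]
    (E1 : V1 → V1 → Prop) (ℓ1 : V1 → α) (E2 : V2 → V2 → Prop) (ℓ2 : V2 → α) :
    (∀ n : ℕ, ∃ z, z ∈ SubseqG E1 ℓ1 ∧ z ∈ SubseqG E2 ℓ2 ∧ n ≤ z.length) ↔
    (∃ c : α, (∃ v1, ℓ1 v1 = c ∧ Relation.TransGen E1 v1 v1) ∧
              (∃ v2, ℓ2 v2 = c ∧ Relation.TransGen E2 v2 v2)) := by
  constructor
  · intro h
    obtain ⟨z, h1, h2, hz⟩ := h (Fintype.card (V1 × V2) + 1)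
    exact exists_common_cycle_label_of_card_lt_length h1 h2 hz
  · rintro ⟨c, ⟨v1, rfl, hv1⟩, ⟨v2, hℓ2, hv2⟩⟩ n
    exact ⟨replicate n (ℓ1 v1), replicate_mem_subseqG hv1 n, hℓ2 ▸ replicate_mem_subseqG hv2 n,
      (length_replicate ..).ge⟩
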